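/- arXiv:1408.0641 — 4 statements merged into one kernel-verified Lean document; each statement's English description precedes it below -/
import Mathlib

section
/- For 0 < λ < 1, lim_{N→∞} ∑_{n=1}^N (∏_{i=1}^{n-1} (1 - i/N)) · λ^{n-1}/n = -log(1-λ)/λ. -/
/-!
After the shift `n = k + 1` the `k`-th term is `(∏ i ∈ Icc 1 k, (1 - i / N)) * l ^ k / (k + 1)`.
For fixed `k` the product tends to `1`, and while `k < N` it lies in `[0, 1]`, so the terms are
dominated by the geometric series `l ^ k`. Tannery's theorem then gives the limit
`∑ l ^ k / (k + 1) = -log (1 - l) / l`.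
-/

open Finset Filter Topology

theorem tendsto_sum_range_of_dominated_convergence {G : Type*} [NormedAddCommGroup G]
    [CompleteSpace G] {f : ℕ → ℕ → G} {g : ℕ → G} {bound : ℕ → ℝ} (h_sum : Summable bound)
    (hab : ∀ k, Tendsto (f · k) atTop (𝓝 (g k)))
    (h_bound : ∀ N, ∀ k < N, ‖f N k‖ ≤ bound k) :
    Tendsto (fun N ↦ ∑ k ∈ range N, f N k) atTop (𝓝 (∑' k, g k)) := by
  set F : ℕ → ℕ → G := fun N k ↦ if k < N then f N k else 0
  have hF : ∀ N, ∑' k, F N k = ∑ k ∈ range N, f N k := fun N ↦ by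
    rw [tsum_eq_sum (s := range N) fun k hk ↦ if_neg (by simpa using hk)]
    exact sum_congr rfl fun k hk ↦ if_pos (mem_range.mp hk)
  refine (tendsto_tsum_of_dominated_convergence h_sum (f := F) (fun k ↦ ?_) ?_).congr hF
  · refine (hab k).congr' ?_
    filter_upwards [eventually_gt_atTop k] with N hN using (if_pos hN).symm
  · refine .of_forall fun N k ↦ ?_
    by_cases hk : k < N
    · simpa [F, hk] using h_bound N k hk
    · simpa [F, hk] using (norm_nonneg _).trans (h_bound (k + 1) k k.lt_succ_self)

theorem Real.hasSum_pow_div_succ {x : ℝ} (h : |x| < 1) (hx : x ≠ 0) :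
    HasSum (fun k : ℕ ↦ x ^ k / (k + 1)) (-log (1 - x) / x) := by
  have hterm (k : ℕ) : x ^ (k + 1) / (k + 1) / x = x ^ k / (k + 1) := by
    rw [pow_succ', mul_div_assoc, mul_div_cancel_left₀ _ hx]
  simpa only [hterm] using (hasSum_pow_div_log_of_abs_lt_one h).div_const x

theorem abs_prod_one_sub_div_le_one {k N : ℕ} (hk : k ≤ N) :
    |∏ i ∈ Icc 1 k, (1 - (i : ℝ) / N)| ≤ 1 := by
  have hfac : ∀ i ∈ Icc 1 k, 0 ≤ 1 - (i : ℝ) / N ∧ 1 - (i : ℝ) / N ≤ 1 := fun i hi ↦ by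
    have hiN : (i : ℝ) ≤ N := by exact_mod_cast (mem_Icc.mp hi).2.trans hk
    have hN : (0 : ℝ) < N := by have := mem_Icc.mp hi; exact_mod_cast (by omega : 0 < N)
    constructor
    · linarith [div_le_one_of_le₀ hiN hN.le]
    · linarith [div_nonneg i.cast_nonneg hN.le]
  rw [abs_of_nonneg (prod_nonneg fun i hi ↦ (hfac i hi).1)]
  exact prod_le_one (fun i hi ↦ (hfac i hi).1) fun i hi ↦ (hfac i hi).2

theorem tendsto_prod_one_sub_div (k : ℕ) :
    Tendsto (fun N : ℕ ↦ ∏ i ∈ Icc 1 k, (1 - (i : ℝ) / N)) atTop (𝓝 1) := by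
  simpa using tendsto_finsetProd (Icc 1 k) fun i _ ↦
    tendsto_const_nhds (x := (1 : ℝ)).sub (tendsto_const_div_atTop_nhds_zero_nat (i : ℝ))

theorem stmt_8 (l : ℝ) (hl : 0 < l) (hl1 : l < 1) :
    Filter.Tendsto
      (fun N : ℕ => ∑ n ∈ Finset.Icc 1 N,
        (∏ i ∈ Finset.Icc 1 (n - 1), (1 - (i : ℝ) / N)) * l ^ (n - 1) / n)
      Filter.atTop (nhds (-Real.log (1 - l) / l)) := by
  set term : ℕ → ℕ → ℝ := fun N k ↦ (∏ i ∈ Icc 1 k, (1 - (i : ℝ) / N)) * l ^ k / (k + 1)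
  have hterm_tendsto (k : ℕ) : Tendsto (term · k) atTop (𝓝 (l ^ k / (k + 1))) := by
    simpa using ((tendsto_prod_one_sub_div k).mul_const (l ^ k)).div_const ((k : ℝ) + 1)
  have hterm_le (N k : ℕ) (hk : k < N) : ‖term N k‖ ≤ l ^ k := by
    rw [norm_div, norm_mul, norm_pow, Real.norm_of_nonneg hl.le,
      Real.norm_of_nonneg (by positivity : (0 : ℝ) ≤ k + 1), Real.norm_eq_abs]
    calc |∏ i ∈ Icc 1 k, (1 - (i : ℝ) / N)| * l ^ k / (k + 1) ≤ 1 * l ^ k / 1 := by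
          gcongr
          · exact abs_prod_one_sub_div_le_one hk.le
          · linarith [k.cast_nonneg (α := ℝ)]
      _ = l ^ k := by ring
  have hlim := tendsto_sum_range_of_dominated_convergence
    (summable_geometric_of_lt_one hl.le hl1) hterm_tendsto hterm_le
  rw [(Real.hasSum_pow_div_succ (abs_lt.mpr ⟨by linarith, hl1⟩) hl.ne').tsum_eq] at hlim
  refine hlim.congr fun N ↦ ?_
  rw [← Ico_add_one_right_eq_Icc, sum_Ico_eq_sum_range]
  simp [term, add_comm]
end

section
/- lim_{N→∞} (∑_{n=1}^N (∏_{i=1}^{n-1} (1 - i/N)) · (1/n)) / ((1/2)·log N) = 1. (The expected duration of the critical (λ = 1) SIS epidemic is asymptotically (1/2)·log N.) -/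
/-! Write `w n = ∏_{i<n} (1 - i/N)`, so `T_N = ∑ w n / n` and `w (n+1) = w n * (1 - n/N)`.
For `n ≤ √(εN)` Bernoulli's inequality gives `w n ≥ 1 - ε`, hence
`T_N ≥ (1 - ε) H_{⌊√(εN)⌋} ≥ (1 - ε) · ½ log (εN)`.
Conversely `w n / n = (N / n²) (w n - w (n+1))` telescopes over `n > m := ⌊√N⌋` to at most
`N / (m+1)² ≤ 1`, while the terms `n ≤ m` contribute at most `H_m ≤ 1 + ½ log N`. -/

open Finset Filter

theorem tendsto_div_nhds_one_of_forall_eventually {α : Type*} {l : Filter α} {f g : α → ℝ}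
    (hg : ∀ᶠ x in l, 0 < g x) (hlow : ∀ a < 1, ∀ᶠ x in l, a * g x < f x)
    (hup : ∀ a > 1, ∀ᶠ x in l, f x < a * g x) :
    Tendsto (fun x => f x / g x) l (nhds 1) :=
  tendsto_order.2 ⟨fun a ha => ((hlow a ha).and hg).mono fun _ h => (lt_div_iff₀ h.2).2 h.1,
    fun a ha => ((hup a ha).and hg).mono fun _ h => (div_lt_iff₀ h.2).2 h.1⟩

namespace SIS

noncomputable def weight (N n : ℕ) : ℝ := ∏ i ∈ Icc 1 (n - 1), (1 - (i : ℝ) / N)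

noncomputable def expectedDuration (N : ℕ) : ℝ := ∑ n ∈ Icc 1 N, weight N n * (1 / (n : ℝ))

variable {N M m n i : ℕ}

lemma one_sub_div_nonneg (hi : i ≤ N) : 0 ≤ 1 - (i : ℝ) / N :=
  sub_nonneg.2 (div_le_one_of_le₀ (by exact_mod_cast hi) (Nat.cast_nonneg N))

lemma weight_nonneg (hn : n ≤ N + 1) : 0 ≤ weight N n :=
  prod_nonneg fun i hi => one_sub_div_nonneg (by simp only [mem_Icc] at hi; omega)

lemma weight_le_one (hn : n ≤ N + 1) : weight N n ≤ 1 :=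
  prod_le_one (fun i hi => one_sub_div_nonneg (by simp only [mem_Icc] at hi; omega))
    fun i _ => sub_le_self _ (by positivity)

lemma weight_succ (hn : 1 ≤ n) : weight N (n + 1) = weight N n * (1 - (n : ℝ) / N) := by
  obtain ⟨k, rfl⟩ := Nat.exists_eq_add_of_le' hn
  simp only [weight, Nat.add_sub_cancel]
  rw [prod_Icc_succ_top (by omega)]

lemma one_sub_sq_div_le_weight (hn : n ≤ N) : 1 - (n : ℝ) ^ 2 / N ≤ weight N n := by
  induction n with
  | zero => simp [weight]
  | succ k ih =>
    rcases Nat.eq_zero_or_pos k with rfl | hk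
    · simp [weight]
    have hw := weight_le_one (N := N) (n := k) (by omega)
    have hkN : 0 ≤ (k : ℝ) / N := by positivity
    calc 1 - ((k + 1 : ℕ) : ℝ) ^ 2 / N ≤ (1 - (k : ℝ) ^ 2 / N) - k / N := by
          push_cast; rw [sub_sub, ← add_div]; gcongr; nlinarith
      _ ≤ weight N k - weight N k * (k / N) :=
          sub_le_sub (ih (by omega)) (mul_le_of_le_one_left hkN hw)
      _ = weight N (k + 1) := by rw [weight_succ hk]; ring

lemma weight_div_le (hN : 0 < N) (hmn : m < n) (hn : n ≤ N) :
    weight N n * (1 / (n : ℝ)) ≤ N / ((m : ℝ) + 1) ^ 2 * (weight N n - weight N (n + 1)) := by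
  have hn0 : (0 : ℝ) < n := by exact_mod_cast (show 0 < n by omega)
  have hN0 : (0 : ℝ) < N := by exact_mod_cast hN
  have hdiff : weight N n - weight N (n + 1) = weight N n * n / N := by
    rw [weight_succ (by omega)]; field_simp; ring
  rw [hdiff]
  have hw := weight_nonneg (N := N) (n := n) (by omega)
  have hmn' : (m : ℝ) + 1 ≤ n := by exact_mod_cast hmn
  calc weight N n * (1 / (n : ℝ)) = N / (n : ℝ) ^ 2 * (weight N n * n / N) := by
        field_simp
    _ ≤ N / ((m : ℝ) + 1) ^ 2 * (weight N n * n / N) := by gcongr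

lemma sum_Ioc_weight_div_le (hmN : m ≤ N) :
    ∑ n ∈ Ioc m N, weight N n * (1 / (n : ℝ)) ≤ N / ((m : ℝ) + 1) ^ 2 := by
  rcases Nat.eq_zero_or_pos N with rfl | hN
  · simp
  calc ∑ n ∈ Ioc m N, weight N n * (1 / (n : ℝ))
      ≤ ∑ n ∈ Ioc m N, N / ((m : ℝ) + 1) ^ 2 * (weight N n - weight N (n + 1)) :=
        sum_le_sum fun n hn => by
          simp only [mem_Ioc] at hn; exact weight_div_le hN hn.1 hn.2
    _ = N / ((m : ℝ) + 1) ^ 2 * (weight N (m + 1) - weight N (N + 1)) := by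
        rw [← mul_sum, ← Ico_add_one_add_one_eq_Ioc, ← neg_sub, ← sum_Ico_sub _ (by omega)]
        simp only [← sum_neg_distrib, neg_sub]
    _ ≤ N / ((m : ℝ) + 1) ^ 2 * 1 := by
        gcongr
        linarith [weight_le_one (N := N) (n := m + 1) (by omega),
          weight_nonneg (N := N) (n := N + 1) le_rfl]
    _ = N / ((m : ℝ) + 1) ^ 2 := mul_one _

lemma harmonic_eq_sum_Icc_one_div : (harmonic n : ℝ) = ∑ k ∈ Icc 1 n, 1 / (k : ℝ) := by
  simp [harmonic_eq_sum_Icc]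

lemma expectedDuration_le_harmonic_add (hmN : m ≤ N) :
    expectedDuration N ≤ harmonic m + N / ((m : ℝ) + 1) ^ 2 := by
  have hsplit : expectedDuration N =
      ∑ n ∈ Ioc 0 m, weight N n * (1 / (n : ℝ)) + ∑ n ∈ Ioc m N, weight N n * (1 / (n : ℝ)) := by
    rw [sum_Ioc_consecutive _ (Nat.zero_le m) hmN]; rfl
  have hhead : ∑ n ∈ Ioc 0 m, weight N n * (1 / (n : ℝ)) ≤ harmonic m := by
    rw [harmonic_eq_sum_Icc_one_div]
    exact sum_le_sum fun n hn => by
      simp only [mem_Ioc] at hn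
      exact mul_le_of_le_one_left (by positivity) (weight_le_one (by omega))
  linarith [sum_Ioc_weight_div_le hmN]

lemma harmonic_mul_le_expectedDuration (hMN : M ≤ N) :
    (1 - (M : ℝ) ^ 2 / N) * harmonic M ≤ expectedDuration N := by
  rw [harmonic_eq_sum_Icc_one_div, mul_sum]
  calc ∑ n ∈ Icc 1 M, (1 - (M : ℝ) ^ 2 / N) * (1 / (n : ℝ))
      ≤ ∑ n ∈ Icc 1 M, weight N n * (1 / (n : ℝ)) := sum_le_sum fun n hn => by
        simp only [mem_Icc] at hn
        have hnM : (n : ℝ) ≤ M := by exact_mod_cast hn.2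
        gcongr
        exact (one_sub_sq_div_le_weight (by omega)).trans' (by gcongr)
    _ ≤ expectedDuration N := sum_le_sum_of_subset_of_nonneg (Icc_subset_Icc_right hMN)
        fun n hn _ => by
          simp only [mem_Icc] at hn
          exact mul_nonneg (weight_nonneg (by omega)) (by positivity)

lemma expectedDuration_le_half_log_add_two (hN : 0 < N) :
    expectedDuration N ≤ 1 / 2 * Real.log N + 2 := by
  set m := Nat.sqrt N
  have hm_pos : (0 : ℝ) < m := by exact_mod_cast Nat.sqrt_pos.2 hN
  have hlog : Real.log m ≤ 1 / 2 * Real.log N := by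
    rw [one_div_mul_eq_div, ← Real.log_sqrt (Nat.cast_nonneg N)]
    exact Real.log_le_log hm_pos Real.nat_sqrt_le_real_sqrt
  have htail : (N : ℝ) / ((m : ℝ) + 1) ^ 2 ≤ 1 := by
    rw [div_le_one (by positivity), ← Real.sq_sqrt (Nat.cast_nonneg N)]
    gcongr
    exact Real.real_sqrt_le_nat_sqrt_succ
  linarith [expectedDuration_le_harmonic_add (Nat.sqrt_le_self N), harmonic_le_one_add_log m]

lemma mul_half_log_le_expectedDuration {ε : ℝ} (hε0 : 0 < ε) (hε1 : ε ≤ 1) (hN : 0 < N) :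
    (1 - ε) * (1 / 2 * (Real.log N + Real.log ε)) ≤ expectedDuration N := by
  set M := ⌊√(ε * N)⌋₊
  have hN0 : (0 : ℝ) < N := by exact_mod_cast hN
  have hM_sq : (M : ℝ) ^ 2 ≤ ε * N := by
    rw [← Real.sq_sqrt (by positivity : 0 ≤ ε * N)]
    gcongr
    exact Nat.floor_le (Real.sqrt_nonneg _)
  have hMN : M ≤ N := by
    have : ((M ^ 2 : ℕ) : ℝ) ≤ N := by push_cast; nlinarith
    exact (Nat.le_self_pow two_ne_zero M).trans (by exact_mod_cast this)
  have hlog : 1 / 2 * (Real.log N + Real.log ε) ≤ harmonic M := by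
    have := log_le_harmonic_floor (√(ε * N)) (Real.sqrt_nonneg _)
    rw [Real.log_sqrt (by positivity), Real.log_mul hε0.ne' hN0.ne'] at this
    linarith
  calc (1 - ε) * (1 / 2 * (Real.log N + Real.log ε)) ≤ (1 - ε) * harmonic M := by
        gcongr
    _ ≤ (1 - (M : ℝ) ^ 2 / N) * harmonic M := by
        gcongr
        · rw [harmonic_eq_sum_Icc_one_div]; positivity
        · exact (div_le_iff₀ hN0).2 hM_sq
    _ ≤ expectedDuration N := harmonic_mul_le_expectedDuration hMN

lemma tendsto_half_log_atTop : Tendsto (fun N : ℕ => 1 / 2 * Real.log N) atTop atTop :=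
  (Real.tendsto_log_atTop.comp tendsto_natCast_atTop_atTop).const_mul_atTop (by norm_num)

lemma eventually_mul_half_log_lt_expectedDuration {a : ℝ} (ha : a < 1) :
    ∀ᶠ N : ℕ in atTop, a * (1 / 2 * Real.log N) < expectedDuration N := by
  set ε := min 1 ((1 - a) / 2)
  have hε0 : 0 < ε := lt_min one_pos (by linarith)
  have hεa : a < 1 - ε := by linarith [min_le_right 1 ((1 - a) / 2)]
  have hL := tendsto_half_log_atTop.const_mul_atTop (sub_pos.2 hεa)
  filter_upwards [hL.eventually_gt_atTop (-(1 - ε) * (1 / 2 * Real.log ε)),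
    eventually_gt_atTop 0] with N hN hN0
  have := mul_half_log_le_expectedDuration hε0 (min_le_left _ _) hN0
  nlinarith

lemma eventually_expectedDuration_lt_mul_half_log {a : ℝ} (ha : 1 < a) :
    ∀ᶠ N : ℕ in atTop, expectedDuration N < a * (1 / 2 * Real.log N) := by
  filter_upwards [(tendsto_half_log_atTop.const_mul_atTop (sub_pos.2 ha)).eventually_gt_atTop 2,
    eventually_gt_atTop 0] with N hN hN0
  linarith [expectedDuration_le_half_log_add_two hN0]

end SIS

theorem stmt_9 :
    Filter.Tendsto
      (fun N : ℕ =>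
        (∑ n ∈ Finset.Icc 1 N,
          (∏ i ∈ Finset.Icc 1 (n - 1), (1 - (i : ℝ) / N)) * (1 / (n : ℝ))) /
          ((1 / 2) * Real.log N))
      Filter.atTop (nhds 1) := by
  exact tendsto_div_nhds_one_of_forall_eventually
    (SIS.tendsto_half_log_atTop.eventually_gt_atTop 0)
    (fun _ => SIS.eventually_mul_half_log_lt_expectedDuration)
    (fun _ => SIS.eventually_expectedDuration_lt_mul_half_log)
end

section
/- For fixed λ > 1, the expected duration T_N := ∑_{n=1}^N (N-1)!/(n·(N-n)!)·(λ/N)^{n-1} of the supercritical SIS epidemic satisfies lim_{N→∞} T_N / ( (√(2π)/(λ-1)) · exp((log λ - 1 + 1/λ)·N) / √N ) = 1. -/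
/-!
Reversing the order of summation, `T_N = (N-1)! (λ/N)^(N-1) ∑_{j<N} (N/λ)^j / ((N-j) j!)`, so after
Stirling's formula for `(N-1)!` everything reduces to the Poisson average
`e^(-μ) ∑_{j<N} N/(N-j) μ^j/j!` with `μ = cN`, `c = 1/λ < 1`. As a Poisson variable concentrates
at `μ`, this average tends to `1/(1-c)`: expanding `N/(N-j)` to first order around `j = μ`, the
linear term has mean zero and the remainder is `O(1/N)` by the second and fourth central moments
`μ` and `3μ² + μ` of the Poisson distribution.
-/

open Finset Filter Real Nat Topology

lemma hasSum_pow_div_factorial (μ : ℝ) : HasSum (fun j : ℕ => μ ^ j / j !) (exp μ) := by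
  rw [exp_eq_exp_ℝ]
  exact NormedSpace.expSeries_div_hasSum_exp μ

lemma hasSum_descFactorial_mul_pow_div_factorial (μ : ℝ) (k : ℕ) :
    HasSum (fun j : ℕ => (j.descFactorial k : ℝ) * (μ ^ j / j !)) (μ ^ k * exp μ) := by
  rw [← hasSum_nat_add_iff' k, sum_eq_zero fun i hi => by
    simp [descFactorial_eq_zero_iff_lt.mpr (mem_range.mp hi)], sub_zero]
  refine ((hasSum_pow_div_factorial μ).mul_left (μ ^ k)).congr_fun fun i => ?_
  have h := factorial_mul_descFactorial (Nat.le_add_left k i)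
  rw [Nat.add_sub_cancel] at h
  rw [← h]
  push_cast
  field_simp
  ring

section CentralMoments

variable (μ : ℝ)

lemma hasSum_sub_mul_pow_div_factorial :
    HasSum (fun j : ℕ => ((j : ℝ) - μ) * (μ ^ j / j !)) 0 := by
  convert! (hasSum_descFactorial_mul_pow_div_factorial μ 1).sub
    ((hasSum_descFactorial_mul_pow_div_factorial μ 0).mul_left μ) using 1
  · ext j
    simp only [← descPochhammer_eval_eq_descFactorial, descPochhammer_succ_eval,
      descPochhammer_zero, Polynomial.eval_one]
    ring
  · ring

lemma hasSum_sub_sq_mul_pow_div_factorial :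
    HasSum (fun j : ℕ => ((j : ℝ) - μ) ^ 2 * (μ ^ j / j !)) (μ * exp μ) := by
  convert ((hasSum_descFactorial_mul_pow_div_factorial μ 2).add
    ((hasSum_descFactorial_mul_pow_div_factorial μ 1).mul_left (1 - 2 * μ))).add
    ((hasSum_descFactorial_mul_pow_div_factorial μ 0).mul_left (μ ^ 2)) using 1
  · ext j
    simp only [← descPochhammer_eval_eq_descFactorial, descPochhammer_succ_eval,
      descPochhammer_zero, Polynomial.eval_one]
    ring
  · ring

lemma hasSum_sub_pow_four_mul_pow_div_factorial :
    HasSum (fun j : ℕ => ((j : ℝ) - μ) ^ 4 * (μ ^ j / j !)) ((3 * μ ^ 2 + μ) * exp μ) := by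
  convert ((((hasSum_descFactorial_mul_pow_div_factorial μ 4).add
    ((hasSum_descFactorial_mul_pow_div_factorial μ 3).mul_left (6 - 4 * μ))).add
    ((hasSum_descFactorial_mul_pow_div_factorial μ 2).mul_left (6 * μ ^ 2 - 12 * μ + 7))).add
    ((hasSum_descFactorial_mul_pow_div_factorial μ 1).mul_left
      (-4 * μ ^ 3 + 6 * μ ^ 2 - 4 * μ + 1))).add
    ((hasSum_descFactorial_mul_pow_div_factorial μ 0).mul_left (μ ^ 4)) using 1
  · ext j
    simp only [← descPochhammer_eval_eq_descFactorial, descPochhammer_succ_eval,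
      descPochhammer_zero, Polynomial.eval_one]
    ring
  · ring

end CentralMoments

/-- Near `μ` the Taylor remainder is `O((j - μ)² / N²)`; for `j` close to `N` it can be as large
as `N`, which the fourth-moment term absorbs. -/
lemma abs_sub_linearization_le {N j : ℕ} {μ : ℝ} (hμN : μ < N) :
    |(if j < N then (N : ℝ) / (N - j) else 0) - N / (N - μ) - N * (j - μ) / (N - μ) ^ 2|
      ≤ 2 * N * (j - μ) ^ 2 / (N - μ) ^ 3 + 4 * N * (j - μ) ^ 4 / (N - μ) ^ 4 := by
  set D : ℝ := N - μ
  set x : ℝ := j - μ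
  have hD : 0 < D := sub_pos.mpr hμN
  have h₂ : 0 ≤ 2 * N * x ^ 2 / D ^ 3 := by positivity
  have h₄ : 0 ≤ 4 * N * x ^ 4 / D ^ 4 := by positivity
  split_ifs with hj
  · have hNj : (1 : ℝ) ≤ N - j := by
      rw [le_sub_iff_add_le']; exact_mod_cast Nat.succ_le_of_lt hj
    -- the remainder of the first-order Taylor expansion of `N / (D - x)` at `x = 0`
    have hrem : (N : ℝ) / (N - j) - N / D - N * x / D ^ 2 = N * x ^ 2 / (D ^ 2 * (N - j)) := by
      rw [show (N : ℝ) - j = D - x by ring] at hNj ⊢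
      field_simp
      ring
    rw [hrem, abs_of_nonneg (by positivity)]
    rcases le_or_gt x (D / 2) with hx | hx
    · calc N * x ^ 2 / (D ^ 2 * (N - j)) ≤ N * x ^ 2 / (D ^ 2 * (D / 2)) := by
            gcongr; linarith
        _ = 2 * N * x ^ 2 / D ^ 3 := by field_simp
        _ ≤ _ := le_add_of_nonneg_right h₄
    · calc N * x ^ 2 / (D ^ 2 * (N - j)) ≤ N * x ^ 2 / D ^ 2 :=
            div_le_div_of_nonneg_left (by positivity) (by positivity)
              (le_mul_of_one_le_right (by positivity) hNj)
        _ ≤ N * x ^ 2 / D ^ 2 * (4 * x ^ 2 / D ^ 2) := by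
            refine le_mul_of_one_le_right (by positivity : (0 : ℝ) ≤ N * x ^ 2 / D ^ 2) ?_
            rw [one_le_div (by positivity)]
            nlinarith
        _ = 4 * N * x ^ 4 / D ^ 4 := by field_simp
        _ ≤ _ := le_add_of_nonneg_left h₂
  · have hDx : D ≤ x := by
      have : (N : ℝ) ≤ j := by exact_mod_cast not_lt.mp hj
      linarith
    have hx : 1 ≤ x / D := (one_le_div hD).mpr hDx
    have hx0 : 0 ≤ x := hD.le.trans hDx
    rw [zero_sub, sub_eq_add_neg, ← neg_add, abs_neg, abs_of_nonneg (by positivity)]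
    calc N / D + N * x / D ^ 2 = N / D * (1 + x / D) := by field_simp
      _ ≤ N / D * (2 * (x / D) ^ 2) := by gcongr; nlinarith
      _ = 2 * N * x ^ 2 / D ^ 3 := by field_simp
      _ ≤ _ := le_add_of_nonneg_right h₄

lemma abs_exp_neg_mul_sum_sub_le {N : ℕ} {μ : ℝ} (hμ : 0 ≤ μ) (hμN : μ < N) :
    |exp (-μ) * ∑ j ∈ range N, (N : ℝ) / (N - j) * (μ ^ j / j !) - N / (N - μ)|
      ≤ 2 * N * μ / (N - μ) ^ 3 + 4 * N * (3 * μ ^ 2 + μ) / (N - μ) ^ 4 := by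
  set D : ℝ := N - μ
  set w : ℕ → ℝ := fun j => if j < N then (N : ℝ) / (N - j) else 0
  have hw : HasSum (fun j : ℕ => w j * (μ ^ j / j !))
      (∑ j ∈ range N, (N : ℝ) / (N - j) * (μ ^ j / j !)) := by
    have hsum : ∑ j ∈ range N, w j * (μ ^ j / j !) = ∑ j ∈ range N, N / (N - j) * (μ ^ j / j !) :=
      sum_congr rfl fun j hj => by simp only [w, if_pos (mem_range.mp hj)]
    rw [← hsum]
    refine hasSum_sum_of_ne_finset_zero fun j hj => ?_
    simp only [w, if_neg (mem_range.not.mp hj), zero_mul]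
  have hremainder := (hw.sub ((hasSum_pow_div_factorial μ).mul_left (N / D))).sub
    ((hasSum_sub_mul_pow_div_factorial μ).mul_left (N / D ^ 2))
  have hbound := ((hasSum_sub_sq_mul_pow_div_factorial μ).mul_left (2 * N / D ^ 3)).add
    ((hasSum_sub_pow_four_mul_pow_div_factorial μ).mul_left (4 * N / D ^ 4))
  have hremainder_le := hremainder.norm_le_of_bounded hbound fun j => by
    have hp : 0 ≤ μ ^ j / j ! := by positivity
    calc ‖w j * (μ ^ j / j !) - N / D * (μ ^ j / j !) - N / D ^ 2 * ((j - μ) * (μ ^ j / j !))‖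
        = |w j - N / D - N * (j - μ) / D ^ 2| * (μ ^ j / j !) := by
          rw [Real.norm_eq_abs, ← abs_of_nonneg hp, ← abs_mul, abs_of_nonneg hp]
          congr 1
          ring
      _ ≤ (2 * N * (j - μ) ^ 2 / D ^ 3 + 4 * N * (j - μ) ^ 4 / D ^ 4) * (μ ^ j / j !) := by
          gcongr
          exact abs_sub_linearization_le hμN
      _ = _ := by ring
  rw [Real.norm_eq_abs, mul_zero, sub_zero] at hremainder_le
  have hexp : exp (-μ) * exp μ = 1 := by rw [← exp_add, neg_add_cancel, exp_zero]
  calc |exp (-μ) * ∑ j ∈ range N, (N : ℝ) / (N - j) * (μ ^ j / j !) - N / D|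
      = |exp (-μ) * (∑ j ∈ range N, (N : ℝ) / (N - j) * (μ ^ j / j !) - N / D * exp μ)| := by
        congr 1
        linear_combination N / D * hexp
    _ = exp (-μ) * |∑ j ∈ range N, (N : ℝ) / (N - j) * (μ ^ j / j !) - N / D * exp μ| := by
        rw [abs_mul, abs_of_pos (exp_pos _)]
    _ ≤ exp (-μ) * (2 * N / D ^ 3 * (μ * exp μ) + 4 * N / D ^ 4 * ((3 * μ ^ 2 + μ) * exp μ)) := by
        gcongr
    _ = _ := by linear_combination (2 * N / D ^ 3 * μ + 4 * N / D ^ 4 * (3 * μ ^ 2 + μ)) * hexp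

lemma tendsto_exp_neg_mul_sum {c : ℝ} (hc0 : 0 ≤ c) (hc1 : c < 1) :
    Tendsto (fun N : ℕ => exp (-(c * N)) * ∑ j ∈ range N, (N : ℝ) / (N - j) * ((c * N) ^ j / j !))
      atTop (𝓝 (1 / (1 - c))) := by
  set a : ℝ := 2 * c / (1 - c) ^ 3 + 12 * c ^ 2 / (1 - c) ^ 4
  set b : ℝ := 4 * c / (1 - c) ^ 4
  have hc : 0 < 1 - c := sub_pos.mpr hc1
  have hbound : ∀ᶠ N : ℕ in atTop,
      ‖exp (-(c * N)) * ∑ j ∈ range N, (N : ℝ) / (N - j) * ((c * N) ^ j / j !) - 1 / (1 - c)‖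
        ≤ a * (N : ℝ)⁻¹ + b * (N : ℝ)⁻¹ ^ 2 := by
    filter_upwards [eventually_gt_atTop 0] with N hN
    have hN : (0 : ℝ) < N := Nat.cast_pos.mpr hN
    have hμN : c * N < N := by nlinarith
    have hL : (N : ℝ) / (N - c * N) = 1 / (1 - c) := by field_simp
    have := abs_exp_neg_mul_sum_sub_le (by positivity) hμN
    rw [hL] at this
    rw [Real.norm_eq_abs]
    refine this.trans_eq ?_
    simp only [a, b]
    field_simp
    ring
  have hlim : Tendsto (fun N : ℕ => a * (N : ℝ)⁻¹ + b * (N : ℝ)⁻¹ ^ 2) atTop (𝓝 0) := by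
    have h := tendsto_inv_atTop_nhds_zero_nat (𝕜 := ℝ)
    simpa using (h.const_mul a).add ((h.pow 2).const_mul b)
  exact tendsto_iff_norm_sub_tendsto_zero.mpr
    (squeeze_zero' (.of_forall fun _ => norm_nonneg _) hbound hlim)

lemma sum_Icc_div_factorial_mul_pow {x : ℝ} (hx : x ≠ 0) (N : ℕ) :
    ∑ n ∈ Icc 1 N, ((N - 1)! : ℝ) / (n * (N - n)!) * x ^ (n - 1)
      = (N - 1)! * x ^ (N - 1) * ∑ j ∈ range N, x⁻¹ ^ j / ((N - j) * j !) := by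
  rw [mul_sum]
  refine sum_nbij' (N - ·) (N - ·) (fun n hn => ?_) (fun j hj => ?_) (fun n hn => ?_)
    (fun j hj => ?_) (fun n hn => ?_)
  all_goals simp only [mem_Icc, mem_range] at *
  all_goals try omega
  obtain ⟨hn1, hnN⟩ := hn
  have hpow : x ^ (N - 1) = x ^ (n - 1) * x ^ (N - n) := by rw [← pow_add]; congr 1; omega
  rw [Nat.cast_sub hnN, sub_sub_cancel, hpow, inv_pow]
  field_simp

lemma duration_div_asymptotic_eq {l : ℝ} (hl : 1 < l) {N : ℕ} (hN : N ≠ 0) :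
    (∑ n ∈ Icc 1 N, ((N - 1)! : ℝ) / (n * (N - n)!) * (l / N) ^ (n - 1)) /
        (√(2 * π) / (l - 1) * exp ((log l - 1 + 1 / l) * N) / √N)
      = Stirling.stirlingSeq N / √π
        * (exp (-(l⁻¹ * N)) * ∑ j ∈ range N, (N : ℝ) / (N - j) * ((l⁻¹ * N) ^ j / j !))
        * ((l - 1) / l) := by
  have hl0 : 0 < l := by linarith
  have hN0 : (0 : ℝ) < N := by positivity
  have hexp : exp ((log l - 1 + 1 / l) * N) = l ^ N * exp (l⁻¹ * N) / exp 1 ^ N := by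
    rw [← exp_log hl0, ← exp_nat_mul, ← exp_nat_mul, ← exp_add, ← exp_sub, exp_log hl0]
    ring_nf
  have hsum : (N : ℝ) * ∑ j ∈ range N, (l / N)⁻¹ ^ j / ((N - j) * j !)
      = ∑ j ∈ range N, (N : ℝ) / (N - j) * ((l⁻¹ * N) ^ j / j !) := by
    rw [mul_sum]
    refine sum_congr rfl fun j hj => ?_
    have : (N : ℝ) - j ≠ 0 := sub_ne_zero.mpr (by exact_mod_cast (mem_range.mp hj).ne')
    field_simp
  rw [sum_Icc_div_factorial_mul_pow (by positivity), ← hsum, hexp, Stirling.stirlingSeq,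
    ← Nat.mul_factorial_pred hN, sqrt_mul (by norm_num), sqrt_mul (by norm_num)]
  obtain ⟨m, rfl⟩ := Nat.exists_eq_add_one_of_ne_zero hN
  rw [exp_neg, div_pow, div_pow, Nat.add_sub_cancel]
  push_cast at hN0 ⊢
  field_simp
  rw [sq_sqrt hN0.le]
  ring

theorem stmt_11 (l : ℝ) (hl : 1 < l) :
    Filter.Tendsto
      (fun N : ℕ =>
        (∑ n ∈ Finset.Icc 1 N,
          (Nat.factorial (N - 1) : ℝ) / ((n : ℝ) * (Nat.factorial (N - n) : ℝ)) *
            (l / N) ^ (n - 1)) /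
        ((Real.sqrt (2 * Real.pi) / (l - 1)) *
          Real.exp ((Real.log l - 1 + 1 / l) * N) / Real.sqrt N))
      Filter.atTop (nhds 1) := by
  have hpoisson :=
    tendsto_exp_neg_mul_sum (inv_nonneg.mpr (by linarith)) (inv_lt_one_of_one_lt₀ hl)
  have hstirling := Stirling.tendsto_stirlingSeq_sqrt_pi.div_const √π
  have hlim := (hstirling.mul hpoisson).mul_const ((l - 1) / l)
  have hl1 : l - 1 ≠ 0 := sub_ne_zero.mpr hl.ne'
  rw [div_self (by positivity), show 1 * (1 / (1 - l⁻¹)) * ((l - 1) / l) = 1 by field_simp] at hlim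
  exact hlim.congr' <| (eventually_ne_atTop 0).mono fun N hN =>
    (duration_div_asymptotic_eq hl hN).symm
end

section
/- For fixed λ > 1, C_N := ∑_{n=1}^N (N-1)!/(N-n)! · (λ/N)^{n-1} satisfies lim_{N→∞} C_N / ( (√(2π)/λ) · √N · exp((log λ - 1 + 1/λ)·N) ) = 1. -/
open Finset Filter Real

open scoped Nat Topology

/-!
Reversing the order of summation, `C_N = (N-1)! (λ/N)^(N-1) ∑_{j<N} μ^j / j!` with `μ = N/λ`.
Stirling's formula turns `(N-1)! (λ/N)^(N-1) e^μ` into exactly the claimed asymptotic size,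
so it remains to see that the truncated exponential series `∑_{j<N} μ^j / j!` is `e^μ (1 + o(1))`.
Since `μ < N`, the missing tail is dominated by a geometric series of ratio `1/λ` starting at
`μ^N / N! ≤ e^N / λ^N`, which is smaller than `e^μ` by the factor `e^{-(log λ - 1 + 1/λ) N}`,
and `log λ - 1 + 1/λ > 0` for `λ > 1`.
-/

theorem sum_Icc_factorial_div_mul_pow {x : ℝ} (hx : x ≠ 0) (N : ℕ) :
    ∑ n ∈ Icc 1 N, ((N - 1)! : ℝ) / (N - n)! * x ^ (n - 1) =
      (N - 1)! * x ^ (N - 1) * ∑ j ∈ range N, x⁻¹ ^ j / j ! := by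
  rw [← Ico_add_one_right_eq_Icc, sum_Ico_eq_sum_range, Nat.add_sub_cancel,
    ← sum_range_reflect, mul_sum]
  refine sum_congr rfl fun j hj => ?_
  have hj : j < N := mem_range.1 hj
  rw [show N - (1 + (N - 1 - j)) = j by omega, show 1 + (N - 1 - j) - 1 = N - 1 - j by omega,
    pow_sub₀ x hx (by omega : j ≤ N - 1), inv_pow]
  ring

theorem factorial_mul_pow_mul_exp_div_eq_stirlingSeq {l : ℝ} (hl : 0 < l) {N : ℕ} (hN : N ≠ 0) :
    (N - 1)! * (l / N) ^ (N - 1) * exp (N / l) /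
        (√(2 * π) / l * √N * exp ((log l - 1 + 1 / l) * N)) =
      Stirling.stirlingSeq N / √π := by
  have hexp : exp ((log l - 1 + 1 / l) * N) = l ^ N / exp 1 ^ N * exp (N / l) := by
    rw [← exp_log hl, ← exp_nat_mul, ← exp_nat_mul, ← exp_sub, ← exp_add, exp_log hl]
    ring_nf
  obtain ⟨n, rfl⟩ := Nat.exists_eq_add_one_of_ne_zero hN
  rw [hexp, Stirling.stirlingSeq, Nat.add_sub_cancel, Nat.factorial_succ, sqrt_mul zero_le_two,
    sqrt_mul zero_le_two]
  push_cast
  simp only [div_pow]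
  field_simp
  ring

theorem exp_sub_sum_range_le {x r : ℝ} {n : ℕ} (hx : 0 ≤ x) (hr : r < 1)
    (hxr : x ≤ r * (n + 1)) :
    exp x - ∑ j ∈ range n, x ^ j / j ! ≤ x ^ n / n ! * (1 - r)⁻¹ := by
  have hr0 : 0 ≤ r := by nlinarith
  have hsum := Real.summable_pow_div_factorial x
  have hexp : exp x = ∑' j, x ^ j / (j ! : ℝ) := by
    rw [exp_eq_exp_ℝ, NormedSpace.exp_eq_tsum_div]
  rw [hexp, ← hsum.sum_add_tsum_nat_add n, add_sub_cancel_left,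
    ← tsum_geometric_of_lt_one hr0 hr, ← tsum_mul_left]
  refine Summable.tsum_le_tsum (fun i => ?_) ((summable_nat_add_iff n).2 hsum)
    ((summable_geometric_of_lt_one hr0 hr).mul_left _)
  have hfac : (n ! * (n + 1) ^ i : ℝ) ≤ (i + n)! := by
    exact_mod_cast add_comm n i ▸ Nat.factorial_mul_pow_le_factorial
  calc x ^ (i + n) / (i + n)! ≤ x ^ (i + n) / (n ! * (n + 1) ^ i) :=
        div_le_div_of_nonneg_left (by positivity) (by positivity) hfac
    _ = x ^ n / n ! * (x / (n + 1)) ^ i := by rw [pow_add, div_pow]; ring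
    _ ≤ x ^ n / n ! * r ^ i := by
        gcongr
        exact (div_le_iff₀ (by positivity)).2 hxr

theorem log_sub_one_add_one_div_pos {l : ℝ} (hl : 1 < l) : 0 < log l - 1 + 1 / l := by
  have := log_lt_sub_one_of_pos (one_div_pos.2 (zero_lt_one.trans hl)) (by simpa using hl.ne')
  rw [one_div, log_inv] at this
  rw [one_div]
  linarith

theorem tendsto_pow_div_factorial_div_exp {l : ℝ} (hl : 1 < l) :
    Tendsto (fun N : ℕ => (N / l : ℝ) ^ N / N ! / exp (N / l)) atTop (𝓝 0) := by
  have hl0 : 0 < l := zero_lt_one.trans hl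
  have hbound (N : ℕ) :
      (N / l : ℝ) ^ N / N ! / exp (N / l) ≤ exp (-(log l - 1 + 1 / l) * N) := by
    have hexp : exp (-(log l - 1 + 1 / l) * N) = exp N / l ^ N / exp (N / l) := by
      rw [← exp_log hl0, ← exp_nat_mul, ← exp_sub, ← exp_sub, exp_log hl0]
      ring_nf
    calc (N / l : ℝ) ^ N / N ! / exp (N / l) = (N : ℝ) ^ N / N ! / l ^ N / exp (N / l) := by
          rw [div_pow]; ring
      _ ≤ exp N / l ^ N / exp (N / l) := by
          gcongr
          exact pow_div_factorial_le_exp _ N.cast_nonneg N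
      _ = _ := hexp.symm
  have hdecay : Tendsto (fun N : ℕ => exp (-(log l - 1 + 1 / l) * N)) atTop (𝓝 0) :=
    tendsto_exp_atBot.comp <| tendsto_natCast_atTop_atTop.const_mul_atTop_of_neg
      (neg_lt_zero.2 (log_sub_one_add_one_div_pos hl))
  exact tendsto_of_tendsto_of_tendsto_of_le_of_le tendsto_const_nhds hdecay
    (fun N => by positivity) hbound

theorem tendsto_sum_range_pow_div_factorial_div_exp {l : ℝ} (hl : 1 < l) :
    Tendsto (fun N : ℕ => (∑ j ∈ range N, (N / l : ℝ) ^ j / j !) / exp (N / l)) atTop (𝓝 1) := by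
  have hl0 : 0 < l := zero_lt_one.trans hl
  have hlower :
      Tendsto (fun N : ℕ => 1 - (N / l : ℝ) ^ N / N ! / exp (N / l) * (1 - 1 / l)⁻¹)
        atTop (𝓝 1) := by
    simpa using tendsto_const_nhds.sub
      ((tendsto_pow_div_factorial_div_exp hl).mul_const (1 - 1 / l)⁻¹)
  refine tendsto_of_tendsto_of_tendsto_of_le_of_le hlower tendsto_const_nhds (fun N => ?_)
    (fun N => (div_le_one (exp_pos _)).2 (sum_le_exp_of_nonneg (by positivity) N))
  have htail := exp_sub_sum_range_le (x := N / l) (r := 1 / l) (n := N) (by positivity)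
    ((div_lt_one hl0).2 hl) (by rw [one_div_mul_eq_div]; gcongr; linarith)
  rw [le_div_iff₀ (exp_pos _), sub_mul, one_mul, div_mul_eq_mul_div,
    div_mul_cancel₀ _ (exp_ne_zero _)]
  linarith

theorem stmt_12 (l : ℝ) (hl : 1 < l) :
    Filter.Tendsto
      (fun N : ℕ =>
        (∑ n ∈ Finset.Icc 1 N,
          (Nat.factorial (N - 1) : ℝ) / (Nat.factorial (N - n) : ℝ) * (l / N) ^ (n - 1)) /
        ((Real.sqrt (2 * Real.pi) / l) * Real.sqrt N *
          Real.exp ((Real.log l - 1 + 1 / l) * N)))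
      Filter.atTop (nhds 1) := by
  have hl0 : 0 < l := zero_lt_one.trans hl
  have hstirling : Tendsto (fun N : ℕ => Stirling.stirlingSeq N / √π) atTop (𝓝 1) := by
    simpa [div_self (sqrt_pos.2 pi_pos).ne'] using
      Stirling.tendsto_stirlingSeq_sqrt_pi.div_const √π
  have hprod := hstirling.mul (tendsto_sum_range_pow_div_factorial_div_exp hl)
  rw [mul_one] at hprod
  refine hprod.congr' ?_
  filter_upwards [eventually_ne_atTop 0] with N hN
  rw [sum_Icc_factorial_div_mul_pow (div_ne_zero hl0.ne' (Nat.cast_ne_zero.2 hN)), inv_div,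
    ← factorial_mul_pow_mul_exp_div_eq_stirlingSeq hl0 hN, div_mul_div_comm,
    mul_right_comm _ (exp _), mul_div_mul_right _ _ (exp_ne_zero _)]
end
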